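/- arXiv:1505.01395 — 2 statements merged into one kernel-verified Lean document; each statement's English description precedes it below -/
import Mathlib

section
/- For every k ∈ {1, …, A₁/aₙ − 1}, the Apéry sets satisfy #S_{kaₙ} ≤ #S_{kaₙ+1}. -/
/-- A numerical semigroup: an additive submonoid of ℕ with finite complement. -/
def IsNumericalSemigroup (Γ : Set ℕ) : Prop :=
  0 ∈ Γ ∧ (∀ x ∈ Γ, ∀ y ∈ Γ, x + y ∈ Γ) ∧ Γᶜ.Finite

/-- The Apéry set Ap(Γ,x) = {s ∈ Γ : s - x ∉ Γ}. -/
def Ap (Γ : Set ℕ) (x : ℕ) : Set ℕ := {s ∈ Γ | ∀ t ∈ Γ, s ≠ t + x}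

/-- The inductive numerical semigroups Γ₀ = ℕ, Γᵢ = aᵢ·Γ_{i-1} ∪ (aᵢbᵢ + ℕ). -/
def IndSG (a b : ℕ → ℕ) : ℕ → Set ℕ
  | 0 => Set.univ
  | i + 1 => (fun x => a (i + 1) * x) '' IndSG a b i ∪ {x | a (i + 1) * b (i + 1) ≤ x}

/-!
If `Γ` contains every integer `≥ N`, then `Γ ∩ [0, N + x)` has exactly `x` more elements than
its translate by `x`, which gives `#Ap(Γ, x) = x + #((Γ + x) \ Γ)`. For
`Γ = aₙΓₙ₋₁ ∪ [aₙbₙ, ∞)`, a gap of `Γ` in `Γ + kaₙ` is a multiple of `aₙ` below `aₙbₙ`, so the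
next integer is again a gap; hence `s ↦ s + 1` injects `(Γ + kaₙ) \ Γ` into `(Γ + kaₙ + 1) \ Γ`.
-/

open Set

theorem Ap_eq_sdiff_image (Γ : Set ℕ) (x : ℕ) : Ap Γ x = Γ \ (· + x) '' Γ := by
  ext s
  simp only [Ap, mem_ofPred_eq, mem_sdiff, mem_image, not_exists, not_and]
  exact and_congr_right fun _ => forall₂_congr fun t _ => ne_comm

theorem ncard_Ap_eq_add_ncard (Γ : Set ℕ) {N : ℕ} (hN : ∀ m, N ≤ m → m ∈ Γ) (x : ℕ) :
    (Ap Γ x).ncard = x + ((· + x) '' Γ \ Γ).ncard := by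
  set G := Γ ∩ Iio (N + x)
  set U := (· + x) '' (Γ ∩ Iio N)
  have hG : G.Finite := (finite_Iio _).inter_of_right Γ
  have hU : U.Finite := ((finite_Iio N).inter_of_right Γ).image _
  have hAp : Ap Γ x = G \ U := by
    ext s
    simp only [Ap_eq_sdiff_image, G, U, mem_sdiff, mem_inter_iff, mem_image, mem_Iio]
    constructor
    · rintro ⟨hs, hsx⟩
      refine ⟨⟨hs, ?_⟩, fun ⟨t, ⟨ht, _⟩, hts⟩ => hsx ⟨t, ht, hts⟩⟩
      by_contra! hle
      exact hsx ⟨s - x, hN _ (by omega), Nat.sub_add_cancel (by omega)⟩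
    · rintro ⟨⟨hs, hsM⟩, hsx⟩
      exact ⟨hs, fun ⟨t, ht, hts⟩ => hsx ⟨t, ⟨ht, by omega⟩, hts⟩⟩
  have hgaps : (· + x) '' Γ \ Γ = U \ G := by
    ext s
    simp only [G, U, mem_sdiff, mem_inter_iff, mem_image, mem_Iio]
    constructor
    · rintro ⟨⟨t, ht, rfl⟩, hs⟩
      have : t < N := by by_contra! h; exact hs (hN _ (by omega))
      exact ⟨⟨t, ⟨ht, this⟩, rfl⟩, fun h => hs h.1⟩
    · rintro ⟨⟨t, ⟨ht, htN⟩, rfl⟩, hs⟩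
      exact ⟨⟨t, ht, rfl⟩, fun h => hs ⟨h, by omega⟩⟩
  have hGU : G.ncard = U.ncard + x := by
    have hsplit : G = (Γ ∩ Iio N) ∪ Ico N (N + x) := by
      ext s
      simp only [G, mem_inter_iff, mem_union, mem_Iio, mem_Ico]
      constructor
      · rintro ⟨hs, hsM⟩
        by_cases hsN : s < N
        exacts [Or.inl ⟨hs, hsN⟩, Or.inr ⟨by omega, hsM⟩]
      · rintro (⟨hs, hsN⟩ | ⟨hsN, hsM⟩)
        exacts [⟨hs, by omega⟩, ⟨hN s hsN, hsM⟩]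
    have hdisj : Disjoint (Γ ∩ Iio N) (Ico N (N + x)) :=
      disjoint_left.2 fun s hs hs' => by
        simp only [mem_inter_iff, mem_Iio, mem_Ico] at hs hs'
        omega
    rw [hsplit, ncard_union_eq hdisj, ncard_image_of_injective _ (add_left_injective x),
      ncard_Ico_nat]
    omega
  have hGsdiff := ncard_sdiff_add_ncard G U hG hU
  have hUsdiff := ncard_sdiff_add_ncard U G hU hG
  rw [union_comm] at hUsdiff
  rw [hAp, hgaps]
  omega

theorem ncard_Ap_le_ncard_Ap_succ (Γ : Set ℕ) {N : ℕ} (hN : ∀ m, N ≤ m → m ∈ Γ) {x : ℕ}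
    (hsucc : ∀ t ∈ Γ, t + x ∉ Γ → t + x + 1 ∉ Γ) :
    (Ap Γ x).ncard ≤ (Ap Γ (x + 1)).ncard := by
  rw [ncard_Ap_eq_add_ncard Γ hN, ncard_Ap_eq_add_ncard Γ hN]
  have hfin : ((· + (x + 1)) '' Γ \ Γ).Finite :=
    (finite_Iio N).subset fun s ⟨_, hs⟩ => by_contra fun h => hs (hN s (not_lt.1 h))
  have hshift : ((· + x) '' Γ \ Γ).ncard ≤ ((· + (x + 1)) '' Γ \ Γ).ncard := by
    refine ncard_le_ncard_of_injOn (· + 1) ?_ (add_left_injective 1).injOn hfin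
    rintro _ ⟨⟨t, ht, rfl⟩, hgap⟩
    exact ⟨⟨t, ht, (add_assoc t x 1).symm⟩, hsucc t ht hgap⟩
  omega

theorem add_one_notMem_of_add_mul_notMem {Λ : Set ℕ} {A B : ℕ} (hA : 2 ≤ A) {t : ℕ} (k : ℕ)
    (ht : t ∈ (A * ·) '' Λ ∪ {x | A * B ≤ x})
    (hgap : t + k * A ∉ (A * ·) '' Λ ∪ {x | A * B ≤ x}) :
    t + k * A + 1 ∉ (A * ·) '' Λ ∪ {x | A * B ≤ x} := by
  have hlt : t + k * A < A * B := by_contra fun h => hgap (Or.inr (not_lt.1 h))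
  obtain ⟨l, -, rfl⟩ : t ∈ (A * ·) '' Λ := ht.resolve_right fun h => by
    simp only [mem_ofPred_eq] at h; omega
  rintro (⟨u, -, hu⟩ | hle)
  · have hu : A * u = A * l + k * A + 1 := hu
    have hdvd : A ∣ 1 :=
      (Nat.dvd_add_right (Dvd.intro (l + k) (by ring))).1 (hu ▸ Dvd.intro u rfl)
    have := Nat.le_of_dvd one_pos hdvd
    omega
  · have hB : l + k + 1 ≤ B := Nat.lt_of_mul_lt_mul_left (a := A) (by linarith)
    have := Nat.mul_le_mul_left A hB
    simp only [mem_ofPred_eq] at hle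
    nlinarith

theorem stmt3_general (n : ℕ) (a b : ℕ → ℕ)
    (ha : ∀ i, 1 ≤ i → i ≤ n → 2 ≤ a i)
    (k : ℕ) :
    (Ap (IndSG a b n) (k * a n)).ncard ≤ (Ap (IndSG a b n) (k * a n + 1)).ncard := by
  cases n with
  | zero =>
    exact ncard_Ap_le_ncard_Ap_succ _ (N := 0) (fun m _ => mem_univ m) fun _ _ h =>
      absurd (mem_univ _) h
  | succ m =>
    exact ncard_Ap_le_ncard_Ap_succ _ (fun _ => Or.inr) fun _ =>
      add_one_notMem_of_add_mul_notMem (ha (m + 1) (by omega) le_rfl) k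

/-- `∏ i in Icc 1 (n-1), a i` is `A₁ / aₙ`. -/
theorem stmt3 (n : ℕ) (hn : 1 ≤ n) (a b : ℕ → ℕ)
    (ha : ∀ i, 1 ≤ i → i ≤ n → 2 ≤ a i)
    (hb1 : 1 ≤ b 1)
    (hb : ∀ i, 1 ≤ i → i + 1 ≤ n → a i * b i ≤ b (i + 1))
    (k : ℕ) (hk1 : 1 ≤ k) (hk2 : k ≤ (∏ i ∈ Finset.Icc 1 (n - 1), a i) - 1) :
    (Ap (IndSG a b n) (k * a n)).ncard ≤ (Ap (IndSG a b n) (k * a n + 1)).ncard :=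
  stmt3_general n a b ha k
end

section
/- The Apéry set cardinalities of Γₙ satisfy: #S₁ = λ₁ + λ₂ + ⋯ + λₙ + 1, and for every k ∈ {0, 1, …, n−1}, #S_{A_{n−k}} = λ₁ + ⋯ + λ_{n−k−1} + A_{n−k} (where the sum λ₁ + ⋯ + λ_{n−k−1} is empty when k = n−1). -/
/-!
Write `Γᵢ = aᵢ·Γᵢ₋₁ ∪ [aᵢbᵢ, ∞)`; the hypothesis `aᵢ₋₁bᵢ₋₁ ≤ bᵢ` says `[bᵢ, ∞) ⊆ Γᵢ₋₁`.
Then an element of `Ap(Γᵢ, aᵢx)` is either `aᵢt` with `t ∈ Ap(Γᵢ₋₁, x)`, or a non-multiple of `aᵢ`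
in `[aᵢbᵢ, aᵢbᵢ + aᵢx)`, so `#Ap(Γᵢ, aᵢx) = #Ap(Γᵢ₋₁, x) + (aᵢ - 1)x`; iterating from `x = 1`
gives `#S_{A_{n-k}} = #Ap(Γ_{n-k-1}, 1) + A_{n-k} - 1`.
For `x = 1`, `Ap(Γᵢ, 1)` is the part of `Γᵢ` up to `aᵢbᵢ`, namely `aᵢ·(Γᵢ₋₁ ∩ [0, bᵢ])`, and
`Γᵢ₋₁ ∩ [0, bᵢ]` has exactly `λᵢ` more elements than `Γᵢ₋₁ ∩ [0, aᵢ₋₁bᵢ₋₁]`.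
-/

def indStep (a b : ℕ) (Γ : Set ℕ) : Set ℕ := (a * ·) '' Γ ∪ Set.Ici (a * b)

theorem indSG_succ (a b : ℕ → ℕ) (i : ℕ) :
    IndSG a b (i + 1) = indStep (a (i + 1)) (b (i + 1)) (IndSG a b i) := rfl

theorem ap_univ (x : ℕ) : Ap Set.univ x = Set.Iio x := by
  ext s
  simp only [Ap, Set.mem_univ, forall_const, true_and, Set.mem_Iio]
  refine ⟨fun h => ?_, fun h t hst => by omega⟩
  by_contra! hxs
  exact h (s - x) (by omega)

theorem ap_finite_of_Ici_subset {Γ : Set ℕ} {c : ℕ} (hΓ : Set.Ici c ⊆ Γ) (x : ℕ) :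
    (Ap Γ x).Finite := by
  refine (Set.finite_Iio (c + x)).subset fun s ⟨_, h⟩ => Set.mem_Iio.2 ?_
  by_contra! hs
  exact h (s - x) (hΓ (Set.mem_Ici.2 (by omega))) (by omega)

theorem ncard_inter_Iic_of_Ici_subset {Γ : Set ℕ} {c y : ℕ} (hΓ : Set.Ici c ⊆ Γ) (hcy : c ≤ y) :
    (Γ ∩ Set.Iic y).ncard = (Γ ∩ Set.Iic c).ncard + (y - c) := by
  have hsplit : Γ ∩ Set.Iic y = Γ ∩ Set.Iic c ∪ Set.Ioc c y := by
    ext t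
    simp only [Set.mem_inter_iff, Set.mem_union, Set.mem_Iic, Set.mem_Ioc]
    constructor
    · rintro ⟨ht, hty⟩
      by_cases htc : t ≤ c
      · exact Or.inl ⟨ht, htc⟩
      · exact Or.inr ⟨by omega, hty⟩
    · rintro (⟨ht, htc⟩ | ⟨hct, hty⟩)
      · exact ⟨ht, htc.trans hcy⟩
      · exact ⟨hΓ (Set.mem_Ici.2 hct.le), hty⟩
  have hdisj : Disjoint (Γ ∩ Set.Iic c) (Set.Ioc c y) :=
    Set.disjoint_left.2 fun t ht ht' => (not_lt.2 ht.2) ht'.1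
  rw [hsplit, Set.ncard_union_eq hdisj ((Set.finite_Iic c).inter_of_right Γ),
    Set.ncard_Ioc_nat]

theorem ncard_Ico_filter_not_dvd_add {a : ℕ} (ha : 0 < a) (b x : ℕ) :
    {s ∈ Set.Ico (a * b) (a * (b + x)) | ¬ a ∣ s}.ncard + x = a * x := by
  have hmul : (a * ·) '' Set.Ico b (b + x) ⊆ Set.Ico (a * b) (a * (b + x)) := by
    rintro _ ⟨t, ⟨hbt, htx⟩, rfl⟩
    exact ⟨Nat.mul_le_mul_left a hbt, Nat.mul_lt_mul_of_pos_left htx ha⟩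
  have hsplit : {s ∈ Set.Ico (a * b) (a * (b + x)) | ¬ a ∣ s}
      = Set.Ico (a * b) (a * (b + x)) \ (a * ·) '' Set.Ico b (b + x) := by
    ext s
    refine ⟨fun ⟨hs, hdvd⟩ => ⟨hs, fun ⟨t, _, hts⟩ => hdvd ⟨t, hts.symm⟩⟩,
      fun ⟨hs, himg⟩ => ⟨hs, ?_⟩⟩
    rintro ⟨t, rfl⟩
    exact himg ⟨t, ⟨(Nat.mul_le_mul_left_iff ha).1 hs.1, (Nat.mul_lt_mul_left ha).1 hs.2⟩, rfl⟩
  have hcard := Set.ncard_sdiff_add_ncard_of_subset hmul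
  rw [Set.ncard_image_of_injective _ (mul_right_injective₀ ha.ne'), Set.ncard_Ico_nat,
    Set.ncard_Ico_nat] at hcard
  rw [hsplit]
  have := mul_add a b x
  omega

namespace indStep

variable {Γ : Set ℕ} {a b : ℕ}

theorem Ici_subset : Set.Ici (a * b) ⊆ indStep a b Γ := Set.subset_union_right

theorem mul_le_of_not_dvd {s : ℕ} (hs : s ∈ indStep a b Γ) (hdvd : ¬ a ∣ s) : a * b ≤ s := by
  rcases hs with ⟨t, -, rfl⟩ | hs
  · exact absurd (dvd_mul_right a t) hdvd
  · exact hs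

theorem mul_mem_iff (ha : 0 < a) (hΓ : Set.Ici b ⊆ Γ) {t : ℕ} :
    a * t ∈ indStep a b Γ ↔ t ∈ Γ := by
  refine ⟨?_, fun ht => Or.inl ⟨t, ht, rfl⟩⟩
  rintro (⟨u, hu, hut⟩ | hbt)
  · rwa [← mul_left_cancel₀ ha.ne' hut]
  · exact hΓ ((Nat.mul_le_mul_left_iff ha).1 hbt)

theorem inter_Iic_mul (ha : 0 < a) (hb : b ∈ Γ) :
    indStep a b Γ ∩ Set.Iic (a * b) = (a * ·) '' (Γ ∩ Set.Iic b) := by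
  ext s
  constructor
  · rintro ⟨⟨t, ht, rfl⟩ | hs, hsle⟩
    · exact ⟨t, ⟨ht, (Nat.mul_le_mul_left_iff ha).1 hsle⟩, rfl⟩
    · exact ⟨b, ⟨hb, Set.mem_Iic.2 le_rfl⟩, le_antisymm (Set.mem_Ici.1 hs) hsle⟩
  · rintro ⟨t, ⟨ht, htb⟩, rfl⟩
    exact ⟨Or.inl ⟨t, ht, rfl⟩, Nat.mul_le_mul_left a htb⟩

/-- Below `a * b` the elements of `indStep a b Γ` are multiples of `a ≥ 2`, so no two of them are
adjacent. -/
theorem ap_one (ha : 1 < a) : Ap (indStep a b Γ) 1 = indStep a b Γ ∩ Set.Iic (a * b) := by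
  have hdvd : ∀ s ∈ indStep a b Γ, s ≤ a * b → a ∣ s := fun s hs hsle => by
    by_contra hdvd
    exact hdvd (le_antisymm hsle (mul_le_of_not_dvd hs hdvd) ▸ dvd_mul_right a b)
  ext s
  constructor
  · rintro ⟨hs, h⟩
    refine ⟨hs, Set.mem_Iic.2 (not_lt.1 fun hlt => h (s - 1) (Ici_subset ?_) (by omega))⟩
    exact Set.mem_Ici.2 (by omega)
  · rintro ⟨hs, hsle⟩
    refine ⟨hs, fun t ht hst => ?_⟩
    have hta : a ∣ t := hdvd t ht (by rw [Set.mem_Iic] at hsle; omega)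
    have hone : a ∣ 1 := (Nat.dvd_add_right hta).1 (hst ▸ hdvd s hs hsle)
    exact absurd (Nat.dvd_one.1 hone) ha.ne'

theorem mul_mem_ap_mul_iff (ha : 0 < a) (hΓ : Set.Ici b ⊆ Γ) {t x : ℕ} :
    a * t ∈ Ap (indStep a b Γ) (a * x) ↔ t ∈ Ap Γ x := by
  simp only [Ap, Set.mem_sep_iff, mul_mem_iff ha hΓ]
  refine and_congr_right fun _ => ⟨fun h u hu htu => h (a * u) (Or.inl ⟨u, hu, rfl⟩)
    (by rw [htu, mul_add]), fun h u hu htu => ?_⟩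
  obtain ⟨w, rfl⟩ : a ∣ u := (Nat.dvd_add_left (dvd_mul_right a x)).1 (htu ▸ dvd_mul_right a t)
  rw [← mul_add] at htu
  exact h w ((mul_mem_iff ha hΓ).1 hu) (mul_left_cancel₀ ha.ne' htu)

theorem not_dvd_mem_ap_mul_iff {s x : ℕ} (hdvd : ¬ a ∣ s) :
    s ∈ Ap (indStep a b Γ) (a * x) ↔ s ∈ Set.Ico (a * b) (a * (b + x)) := by
  rw [mul_add]
  constructor
  · rintro ⟨hs, h⟩
    refine ⟨mul_le_of_not_dvd hs hdvd, not_le.1 fun hge => h (s - a * x) (Ici_subset ?_) (by omega)⟩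
    exact Set.mem_Ici.2 (by omega)
  · rintro ⟨hbs, hsx⟩
    refine ⟨Ici_subset hbs, fun t ht hst => ?_⟩
    have htdvd : ¬ a ∣ t := fun h => hdvd (hst ▸ dvd_add h (dvd_mul_right a x))
    have := mul_le_of_not_dvd ht htdvd
    omega

theorem ap_mul (ha : 0 < a) (hΓ : Set.Ici b ⊆ Γ) (x : ℕ) :
    Ap (indStep a b Γ) (a * x)
      = (a * ·) '' Ap Γ x ∪ {s ∈ Set.Ico (a * b) (a * (b + x)) | ¬ a ∣ s} := by
  ext s
  by_cases hdvd : a ∣ s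
  · obtain ⟨t, rfl⟩ := hdvd
    simp [mul_mem_ap_mul_iff ha hΓ, mul_right_inj' ha.ne']
  · rw [not_dvd_mem_ap_mul_iff hdvd]
    simp only [Set.mem_union, Set.mem_image, Set.mem_sep_iff, hdvd, not_false_eq_true, and_true]
    exact ⟨Or.inr, fun h => h.resolve_left fun ⟨t, _, hts⟩ => hdvd ⟨t, hts.symm⟩⟩

theorem ncard_ap_mul_add (ha : 0 < a) (hΓ : Set.Ici b ⊆ Γ) (x : ℕ) :
    (Ap (indStep a b Γ) (a * x)).ncard + x = (Ap Γ x).ncard + a * x := by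
  have hdisj : Disjoint ((a * ·) '' Ap Γ x) {s ∈ Set.Ico (a * b) (a * (b + x)) | ¬ a ∣ s} :=
    Set.disjoint_left.2 fun _ ⟨t, _, hts⟩ hs => hs.2 ⟨t, hts.symm⟩
  rw [ap_mul ha hΓ, Set.ncard_union_eq hdisj ((ap_finite_of_Ici_subset hΓ x).image _)
    ((Set.finite_Ico _ _).subset (Set.sep_subset _ _)),
    Set.ncard_image_of_injective _ (mul_right_injective₀ ha.ne'), add_assoc,
    ncard_Ico_filter_not_dvd_add ha]

end indStep

section IndSG

variable {n : ℕ} {a b : ℕ → ℕ}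

theorem Ici_subset_indSG (hb : ∀ i, 1 ≤ i → i + 1 ≤ n → a i * b i ≤ b (i + 1))
    {m : ℕ} (hm : m + 1 ≤ n) : Set.Ici (b (m + 1)) ⊆ IndSG a b m := by
  cases m with
  | zero => exact Set.subset_univ _
  | succ k => exact (Set.Ici_subset_Ici.2 (hb (k + 1) (by omega) hm)).trans indStep.Ici_subset

theorem ncard_indSG_inter_Iic (ha : ∀ i, 1 ≤ i → i ≤ n → 2 ≤ a i)
    (hb : ∀ i, 1 ≤ i → i + 1 ≤ n → a i * b i ≤ b (i + 1)) {lam : ℕ → ℕ}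
    (hlam1 : lam 1 = b 1) (hlam : ∀ i, 2 ≤ i → i ≤ n → lam i = b i - a (i - 1) * b (i - 1))
    {m : ℕ} (hm : m + 1 ≤ n) :
    (IndSG a b m ∩ Set.Iic (b (m + 1))).ncard = ∑ i ∈ Finset.Icc 1 (m + 1), lam i + 1 := by
  induction m with
  | zero => simp [IndSG, hlam1]
  | succ k ih =>
    have hab : 0 < a (k + 1) := by linarith [ha (k + 1) (by omega) (by omega)]
    have hlamk : lam (k + 1 + 1) = b (k + 1 + 1) - a (k + 1) * b (k + 1) :=
      hlam (k + 2) (by omega) hm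
    rw [indSG_succ, ncard_inter_Iic_of_Ici_subset indStep.Ici_subset (hb (k + 1) (by omega) hm),
      indStep.inter_Iic_mul hab (Ici_subset_indSG hb (by omega) (Set.mem_Ici.2 le_rfl)),
      Set.ncard_image_of_injective _ (mul_right_injective₀ hab.ne'), ih (by omega),
      Finset.sum_Icc_succ_top (show 1 ≤ k + 1 + 1 by omega), hlamk]
    omega

theorem ncard_ap_indSG_one (ha : ∀ i, 1 ≤ i → i ≤ n → 2 ≤ a i)
    (hb : ∀ i, 1 ≤ i → i + 1 ≤ n → a i * b i ≤ b (i + 1)) {lam : ℕ → ℕ}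
    (hlam1 : lam 1 = b 1) (hlam : ∀ i, 2 ≤ i → i ≤ n → lam i = b i - a (i - 1) * b (i - 1))
    {m : ℕ} (hm : m ≤ n) :
    (Ap (IndSG a b m) 1).ncard = ∑ i ∈ Finset.Icc 1 m, lam i + 1 := by
  cases m with
  | zero => simp [IndSG, ap_univ]
  | succ k =>
    have hab : 0 < a (k + 1) := by linarith [ha (k + 1) (by omega) hm]
    rw [indSG_succ, indStep.ap_one (ha (k + 1) (by omega) hm),
      indStep.inter_Iic_mul hab (Ici_subset_indSG hb hm (Set.mem_Ici.2 le_rfl)),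
      Set.ncard_image_of_injective _ (mul_right_injective₀ hab.ne'),
      ncard_indSG_inter_Iic ha hb hlam1 hlam hm]

theorem ncard_ap_indSG_mul_prod_add (ha : ∀ i, 1 ≤ i → i ≤ n → 2 ≤ a i)
    (hb : ∀ i, 1 ≤ i → i + 1 ≤ n → a i * b i ≤ b (i + 1)) {m M : ℕ} (hmM : m ≤ M) (hM : M ≤ n)
    (x : ℕ) :
    (Ap (IndSG a b M) (x * ∏ j ∈ Finset.Ioc m M, a j)).ncard + x
      = (Ap (IndSG a b m) x).ncard + x * ∏ j ∈ Finset.Ioc m M, a j := by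
  induction M, hmM using Nat.le_induction with
  | base => simp
  | succ M hmM ih =>
    have hab : 0 < a (M + 1) := by linarith [ha (M + 1) (by omega) hM]
    have hstep := indStep.ncard_ap_mul_add hab (Ici_subset_indSG hb hM)
      (x * ∏ j ∈ Finset.Ioc m M, a j)
    rw [← indSG_succ] at hstep
    rw [Finset.prod_Ioc_succ_top hmM, mul_comm _ (a (M + 1)), ← mul_assoc, mul_comm x,
      mul_assoc]
    have := ih (by omega)
    omega

end IndSG

theorem stmt7_general (n : ℕ) (hn : 1 ≤ n) (a b : ℕ → ℕ)
    (ha : ∀ i, 1 ≤ i → i ≤ n → 2 ≤ a i)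
    (hb : ∀ i, 1 ≤ i → i + 1 ≤ n → a i * b i ≤ b (i + 1))
    (A lam : ℕ → ℕ)
    (hA : ∀ i, A i = ∏ j ∈ Finset.Icc i n, a j)
    (hlam1 : lam 1 = b 1)
    (hlam : ∀ i, 2 ≤ i → i ≤ n → lam i = b i - a (i - 1) * b (i - 1)) :
    (Ap (IndSG a b n) 1).ncard = (∑ i ∈ Finset.Icc 1 n, lam i) + 1
    ∧ ∀ k, k ≤ n - 1 →
        (Ap (IndSG a b n) (A (n - k))).ncard
          = (∑ i ∈ Finset.Icc 1 (n - k - 1), lam i) + A (n - k) := by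
  refine ⟨ncard_ap_indSG_one ha hb hlam1 hlam le_rfl, fun k hk => ?_⟩
  have hA' : A (n - k) = ∏ j ∈ Finset.Ioc (n - k - 1) n, a j := by
    rw [hA, ← Finset.Icc_add_one_left_eq_Ioc, Nat.sub_add_cancel (by omega)]
  have hprod := ncard_ap_indSG_mul_prod_add ha hb (m := n - k - 1) (by omega) le_rfl 1
  rw [one_mul, ← hA', ncard_ap_indSG_one ha hb hlam1 hlam (by omega)] at hprod
  omega

theorem stmt7 (n : ℕ) (hn : 1 ≤ n) (a b : ℕ → ℕ)
    (ha : ∀ i, 1 ≤ i → i ≤ n → 2 ≤ a i)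
    (hb1 : 1 ≤ b 1)
    (hb : ∀ i, 1 ≤ i → i + 1 ≤ n → a i * b i ≤ b (i + 1))
    (A lam : ℕ → ℕ)
    (hA : ∀ i, A i = ∏ j ∈ Finset.Icc i n, a j)
    (hlam1 : lam 1 = b 1)
    (hlam : ∀ i, 2 ≤ i → i ≤ n → lam i = b i - a (i - 1) * b (i - 1)) :
    (Ap (IndSG a b n) 1).ncard = (∑ i ∈ Finset.Icc 1 n, lam i) + 1
    ∧ ∀ k, k ≤ n - 1 →
        (Ap (IndSG a b n) (A (n - k))).ncard
          = (∑ i ∈ Finset.Icc 1 (n - k - 1), lam i) + A (n - k) :=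
  stmt7_general n hn a b ha hb A lam hA hlam1 hlam
end
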